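/- arXiv:0805.1618 — 4 statements merged into one kernel-verified Lean document; each statement's English description precedes it below -/
import Mathlib

section
/- Let Λ = (λ_0,…,λ_n) ∈ ℂ^{n+1} and let a ≠ b be real numbers. Then the following are equivalent: (a) there exists a Bernstein basis p_{n,k}, k = 0,…,n, of E_Λ for {a,b}; (b) E_Λ is an extended Chebyshev system for the two-point set {a,b}; (c) Φ_{n,k}(b−a) ≠ 0 for every k = 0,…,n. -/
open Filter Topology Set

noncomputable section

/-- The differential operator `(d/dx − λ₀)⋯(d/dx − λₙ)` applied to `f`,
where `λ₀,…,λₙ` are the entries of the list. -/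
def LOp : List ℂ → (ℝ → ℂ) → (ℝ → ℂ)
  | [], f => f
  | c :: r, f => LOp r (fun x => deriv f x - c * f x)

/-- The space `E_Λ` of exponential polynomials with eigenvalue vector `l`. -/
def ExpPoly (l : List ℂ) : Set (ℝ → ℂ) :=
  {f | ContDiff ℝ (⊤ : ℕ∞) f ∧ LOp l f = 0}

/-- `f` has a zero of order (multiplicity) exactly `k` at `x₀`. -/
def HasZeroOfOrder (f : ℝ → ℂ) (x₀ : ℝ) (k : ℕ) : Prop :=
  (∀ j < k, iteratedDeriv j f x₀ = 0) ∧ iteratedDeriv k f x₀ ≠ 0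

/-- `E_l` (with `l.length = n + 1`) is an extended Chebyshev system for `A ⊆ ℝ`:
every nonzero member has at most `n` zeros in `A`, counted with multiplicity. -/
def IsExtChebyshev (l : List ℂ) (A : Set ℝ) : Prop :=
  ∀ f ∈ ExpPoly l, f ≠ 0 → ∀ (s : Finset ℝ) (m : ℝ → ℕ),
    (↑s : Set ℝ) ⊆ A → (∀ x ∈ s, ∀ j < m x, iteratedDeriv j f x = 0) →
    ∑ x ∈ s, m x ≤ l.length - 1

/-- `p k`, `k = 0,…,n` (with `l.length = n + 1`) is the normalized Bernstein basis of
`E_l` for the points `a ≠ b`: `p k` lies in `E_l`, has a zero of order exactly `k`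
at `a`, a zero of order exactly `n − k` at `b`, and `(p k)^{(k)}(a) = 1`. -/
def IsBernsteinBasis (l : List ℂ) (a b : ℝ) (p : ℕ → ℝ → ℂ) : Prop :=
  ∀ k ≤ l.length - 1,
    p k ∈ ExpPoly l ∧ HasZeroOfOrder (p k) a k ∧
      HasZeroOfOrder (p k) b (l.length - 1 - k) ∧ iteratedDeriv k (p k) a = 1

/-- `E_l` is closed under (pointwise) complex conjugation. -/
def ConjClosed (l : List ℂ) : Prop :=
  ∀ f ∈ ExpPoly l, (fun x => starRingEnd ℂ (f x)) ∈ ExpPoly l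

/-!
Let `E = E_Λ`. An element of `E` with a zero of order `n + 1` is `0` (peel off one factor
`d/dx - λ` at a time and solve a first-order linear ODE), so any `n + 1` elements of `E` whose
jets at a point are linearly independent span `E`.

(a) ⇒ (b): expand `f` in the Bernstein basis; a zero of order `α` at `a` kills the first `α`
coefficients and a zero of order `β` at `b` the last `β`, so `α + β ≤ n` unless `f = 0`.

(b) ⇒ (c): for `w : Fin (k + 1) → ℂ`, `f = ∑ w_j Φ^{(j)}(· - a)` has a zero of order `n - k`
at `a` (the jets of `Φ` at `0` are anti-triangular, which also gives `f ≠ 0` for `w ≠ 0`) and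
`(f^{(i)}(b))_{i ≤ k} = H_k(b - a) w` for the Hankel matrix `H_k`. A kernel vector of
`H_k(b - a)` thus produces `n + 1` zeros.

(c) ⇒ (a): solving `H_m(b - a) w = e_m` gives `f` with a zero of order exactly `m` at `b` and of
order `n - m` at `a`, where `f^{(n-m)}(a) = w_m = det H_{m-1}(b - a) / det H_m(b - a) ≠ 0`.
-/

open scoped Matrix

def VanishesToOrder (f : ℝ → ℂ) (x₀ : ℝ) (k : ℕ) : Prop :=
  ∀ j < k, iteratedDeriv j f x₀ = 0

theorem eq_zero_of_triangular_sum_eq_zero {ι R : Type*} [Fintype ι] [CommRing R]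
    [NoZeroDivisors R] {M : ℕ → ι → R} {d : ι → ℕ} (hd : Function.Injective d)
    (hM : ∀ i j, i < d j → M i j = 0) (hdiag : ∀ j, M (d j) j ≠ 0) {c : ι → R} {K : ℕ}
    (hc : ∀ i < K, ∑ j, M i j * c j = 0) : ∀ j, d j < K → c j = 0 := by
  induction K with
  | zero => exact fun j hj => absurd hj (Nat.not_lt_zero _)
  | succ K ih =>
    have ih := ih fun i hi => hc i (Nat.lt_succ_of_lt hi)
    intro j hj
    rcases Nat.lt_succ_iff_lt_or_eq.mp hj with hjK | rfl
    · exact ih j hjK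
    have hsum := hc (d j) (Nat.lt_succ_self _)
    rw [Finset.sum_eq_single j (fun j' _ hj' => ?_) (by simp)] at hsum
    · exact (mul_eq_zero.mp hsum).resolve_left (hdiag j)
    rcases lt_trichotomy (d j') (d j) with h | h | h
    · rw [ih j' h, mul_zero]
    · exact absurd (hd h) hj'
    · rw [hM _ j' h, zero_mul]

theorem Matrix.apply_last_ne_zero_of_mulVec_eq_single {K : Type*} [Field K] {m : ℕ}
    {A : Matrix (Fin (m + 1)) (Fin (m + 1)) K}
    (hA : (A.submatrix Fin.castSucc Fin.castSucc).det ≠ 0) {w : Fin (m + 1) → K}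
    (hw : A *ᵥ w = Pi.single (Fin.last m) 1) : w (Fin.last m) ≠ 0 := by
  intro hlast
  have hinit : A.submatrix Fin.castSucc Fin.castSucc *ᵥ (w ∘ Fin.castSucc) = 0 := by
    funext i
    have := congrFun hw i.castSucc
    simp only [Matrix.mulVec, dotProduct, Fin.sum_univ_castSucc, hlast, mul_zero,
      add_zero] at this
    simpa [Matrix.mulVec, dotProduct, Fin.castSucc_ne_last] using this
  have hw0 : w = 0 := by
    by_contra hw0
    refine hA (Matrix.exists_mulVec_eq_zero_iff.mp ⟨w ∘ Fin.castSucc, fun h => hw0 ?_, hinit⟩)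
    funext j
    induction j using Fin.lastCases with
    | last => exact hlast
    | cast j => exact congrFun h j
  simpa [hw0] using congrFun hw (Fin.last m)

theorem eq_zero_of_deriv_eq_mul {f : ℝ → ℂ} {μ : ℂ} (hf : Differentiable ℝ f)
    (hode : ∀ x, deriv f x = μ * f x) {x₀ : ℝ} (h₀ : f x₀ = 0) : f = 0 := by
  have hderiv : ∀ x, HasDerivAt (fun y : ℝ => Complex.exp (-μ * y) * f y) 0 x := by
    intro x
    refine ((((hasDerivAt_id x).ofReal_comp.const_mul (-μ)).cexp).fun_mul
      (hf x).hasDerivAt).congr_deriv ?_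
    rw [hode x]
    simp only [id, Complex.ofReal_one]
    ring
  funext x
  have := is_const_of_deriv_eq_zero (fun y => (hderiv y).differentiableAt)
    (fun y => (hderiv y).deriv) x x₀
  simpa [h₀, Complex.exp_ne_zero] using this

section Calculus

variable {𝕜 F : Type*} [NontriviallyNormedField 𝕜] [NormedAddCommGroup F] [NormedSpace 𝕜 F]

theorem ContDiff.contDiffAt_nat {f : 𝕜 → F} (hf : ContDiff 𝕜 (⊤ : ℕ∞) f) (n : ℕ) (x : 𝕜) :
    ContDiffAt 𝕜 n f x :=
  hf.contDiffAt.of_le (by exact_mod_cast le_top)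

theorem iteratedDeriv_iteratedDeriv (i j : ℕ) (f : 𝕜 → F) :
    iteratedDeriv i (iteratedDeriv j f) = iteratedDeriv (i + j) f := by
  simp only [iteratedDeriv_eq_iterate, Function.iterate_add_apply]

end Calculus

theorem iteratedDeriv_sum_smul {ι : Type*} [Fintype ι] {g : ι → ℝ → ℂ}
    (hg : ∀ j, ContDiff ℝ (⊤ : ℕ∞) (g j)) (c : ι → ℂ) (i : ℕ) (x : ℝ) :
    iteratedDeriv i (∑ j, c j • g j) x = ∑ j, iteratedDeriv i (g j) x * c j := by
  rw [iteratedDeriv_sum (f := fun j => c j • g j) fun j _ =>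
    ((hg j).const_smul (c j)).contDiffAt_nat i x]
  simp [mul_comm]

section ExpPoly

variable {l : List ℂ} {f g : ℝ → ℂ}

theorem contDiff_deriv_sub_mul (hf : ContDiff ℝ (⊤ : ℕ∞) f) (μ : ℂ) :
    ContDiff ℝ (⊤ : ℕ∞) (fun x => deriv f x - μ * f x) :=
  (contDiff_infty_iff_deriv.mp hf).2.sub (contDiff_const.mul hf)

theorem LOp_smul (l : List ℂ) (c : ℂ) (f : ℝ → ℂ) : LOp l (c • f) = c • LOp l f := by
  induction l generalizing f with
  | nil => rfl
  | cons μ r ih =>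
    simp only [LOp, ← ih]
    congr 1
    funext x
    simp only [Pi.smul_apply, smul_eq_mul, deriv_const_smul_field]
    ring

theorem LOp_add (l : List ℂ) (hf : ContDiff ℝ (⊤ : ℕ∞) f)
    (hg : ContDiff ℝ (⊤ : ℕ∞) g) :
    LOp l (f + g) = LOp l f + LOp l g := by
  induction l generalizing f g with
  | nil => rfl
  | cons μ r ih =>
    simp only [LOp, ← ih (contDiff_deriv_sub_mul hf μ) (contDiff_deriv_sub_mul hg μ)]
    congr 1
    funext x
    rw [Pi.add_apply, deriv_add (hf.differentiable (by simp) x) (hg.differentiable (by simp) x)]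
    simp only [Pi.add_apply]
    ring

theorem LOp_deriv (l : List ℂ) (hf : ContDiff ℝ (⊤ : ℕ∞) f) :
    LOp l (deriv f) = deriv (LOp l f) := by
  induction l generalizing f with
  | nil => rfl
  | cons μ r ih =>
    simp only [LOp, ← ih (contDiff_deriv_sub_mul hf μ)]
    congr 1
    funext x
    have hf' := contDiff_infty_iff_deriv.mp hf
    rw [deriv_fun_sub (hf'.2.differentiable (by simp) x) ((hf'.1 x).const_mul μ),
      deriv_const_mul_field']

theorem LOp_comp_sub_const (l : List ℂ) (t : ℝ) (f : ℝ → ℂ) :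
    LOp l (fun x => f (x - t)) = fun x => LOp l f (x - t) := by
  induction l generalizing f with
  | nil => rfl
  | cons μ r ih =>
    simp only [LOp, ← ih]
    congr 1
    funext x
    rw [deriv_comp_sub_const]

def expPolySubmodule (l : List ℂ) : Submodule ℂ (ℝ → ℂ) where
  carrier := ExpPoly l
  zero_mem' := ⟨contDiff_const, by simpa using LOp_smul l 0 0⟩
  add_mem' hf hg := ⟨hf.1.add hg.1, by rw [LOp_add l hf.1 hg.1, hf.2, hg.2, add_zero]⟩
  smul_mem' c _ hf := ⟨hf.1.const_smul c, by rw [LOp_smul, hf.2, smul_zero]⟩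

theorem ExpPoly.smul_mem (c : ℂ) (hf : f ∈ ExpPoly l) : c • f ∈ ExpPoly l :=
  (expPolySubmodule l).smul_mem c hf

theorem ExpPoly.sub_mem (hf : f ∈ ExpPoly l) (hg : g ∈ ExpPoly l) : f - g ∈ ExpPoly l :=
  (expPolySubmodule l).sub_mem hf hg

theorem ExpPoly.sum_smul_mem {ι : Type*} [Fintype ι] (c : ι → ℂ) {g : ι → ℝ → ℂ}
    (hg : ∀ j, g j ∈ ExpPoly l) : ∑ j, c j • g j ∈ ExpPoly l :=
  (expPolySubmodule l).sum_mem fun j _ => ExpPoly.smul_mem (c j) (hg j)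

theorem ExpPoly.iteratedDeriv_mem (hf : f ∈ ExpPoly l) (j : ℕ) :
    iteratedDeriv j f ∈ ExpPoly l := by
  induction j with
  | zero => simpa using hf
  | succ j ih =>
    rw [iteratedDeriv_succ]
    exact ⟨(contDiff_infty_iff_deriv.mp ih.1).2, by rw [LOp_deriv l ih.1, ih.2]; simp⟩

theorem ExpPoly.comp_sub_const_mem (hf : f ∈ ExpPoly l) (t : ℝ) :
    (fun x => f (x - t)) ∈ ExpPoly l :=
  ⟨hf.1.comp (contDiff_id.sub contDiff_const), by rw [LOp_comp_sub_const, hf.2]; rfl⟩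

theorem iteratedDeriv_deriv_sub_mul (hf : ContDiff ℝ (⊤ : ℕ∞) f) (μ : ℂ) (j : ℕ)
    (x : ℝ) :
    iteratedDeriv j (fun x => deriv f x - μ * f x) x
      = iteratedDeriv (j + 1) f x - μ * iteratedDeriv j f x := by
  rw [iteratedDeriv_fun_sub ((contDiff_infty_iff_deriv.mp hf).2.contDiffAt_nat j x)
    ((contDiff_const.mul hf).contDiffAt_nat j x), iteratedDeriv_const_mul_field,
    iteratedDeriv_succ']

theorem ExpPoly.eq_zero_of_vanishesToOrder (hf : f ∈ ExpPoly l) {x₀ : ℝ}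
    (h : VanishesToOrder f x₀ l.length) : f = 0 := by
  induction l generalizing f with
  | nil => exact hf.2
  | cons μ r ih =>
    have hstep : (fun x => deriv f x - μ * f x) = 0 := by
      refine ih ⟨contDiff_deriv_sub_mul hf.1 μ, hf.2⟩ fun j hj => ?_
      rw [iteratedDeriv_deriv_sub_mul hf.1, h (j + 1) (by simpa using hj),
        h j (by simp; omega), mul_zero, sub_zero]
    exact eq_zero_of_deriv_eq_mul (hf.1.differentiable (by simp))
      (fun x => sub_eq_zero.mp (congrFun hstep x)) (by simpa using h 0 (by simp))

theorem ExpPoly.exists_eq_sum_smul {n : ℕ} (hl : l.length = n + 1)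
    {g : Fin (n + 1) → ℝ → ℂ} (hg : ∀ j, g j ∈ ExpPoly l) {x₀ : ℝ}
    (hind : ∀ c : Fin (n + 1) → ℂ,
      (∀ i < n + 1, ∑ j, iteratedDeriv i (g j) x₀ * c j = 0) → c = 0)
    (hf : f ∈ ExpPoly l) : ∃ c : Fin (n + 1) → ℂ, f = ∑ j, c j • g j := by
  set A : Matrix (Fin (n + 1)) (Fin (n + 1)) ℂ :=
    Matrix.of fun i j => iteratedDeriv i (g j) x₀
  have hA : A.det ≠ 0 := fun h => by
    obtain ⟨c, hc0, hc⟩ := Matrix.exists_mulVec_eq_zero_iff.mpr h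
    exact hc0 (hind c fun i hi => congrFun hc ⟨i, hi⟩)
  obtain ⟨c, hc⟩ := Matrix.mulVec_surjective_iff_isUnit.mpr
    (A.isUnit_iff_isUnit_det.mpr hA.isUnit) fun i => iteratedDeriv i f x₀
  have hsum := ExpPoly.sum_smul_mem c hg
  refine ⟨c, sub_eq_zero.mp
    (ExpPoly.eq_zero_of_vanishesToOrder (ExpPoly.sub_mem hf hsum) (x₀ := x₀) ?_)⟩
  intro i hi
  rw [hl] at hi
  rw [iteratedDeriv_sub (hf.1.contDiffAt_nat i x₀) (hsum.1.contDiffAt_nat i x₀),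
    iteratedDeriv_sum_smul (fun j => (hg j).1), ← congrFun hc ⟨i, hi⟩, sub_eq_zero]
  rfl

end ExpPoly
theorem isExtChebyshev_pair_iff {l : List ℂ} {a b : ℝ} (hab : a ≠ b) :
    IsExtChebyshev l {a, b} ↔ ∀ f ∈ ExpPoly l, f ≠ 0 → ∀ α β : ℕ,
      VanishesToOrder f a α → VanishesToOrder f b β → α + β ≤ l.length - 1 := by
  constructor
  · intro hC f hf hf0 α β hα hβ
    have h := hC f hf hf0 {a, b} (fun x => if x = a then α else β) (by simp) fun x hx j hj => by
      rcases Finset.mem_insert.mp hx with rfl | hx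
      · exact hα j (by simpa using hj)
      · rw [Finset.mem_singleton.mp hx] at hj ⊢
        exact hβ j (by simpa [hab.symm] using hj)
    simpa [Finset.sum_pair hab, hab.symm] using h
  · intro hC f hf hf0 s m hs hvan
    have hsum : ∑ x ∈ s, m x = ∑ x ∈ ({a, b} : Finset ℝ), if x ∈ s then m x else 0 := by
      rw [Finset.sum_ite_mem, Finset.inter_eq_right.mpr fun x hx => by simpa using hs hx]
    have hvan' : ∀ x, VanishesToOrder f x (if x ∈ s then m x else 0) := by
      intro x j hj
      split_ifs at hj with hx
      exacts [hvan x hx j hj, absurd hj (Nat.not_lt_zero j)]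
    rw [hsum, Finset.sum_pair hab]
    exact hC f hf hf0 _ _ (hvan' a) (hvan' b)

section Fundamental

variable {l : List ℂ} {n : ℕ} {Φ : ℝ → ℂ} {a b : ℝ}

def IsFundamental (l : List ℂ) (n : ℕ) (Φ : ℝ → ℂ) : Prop :=
  Φ ∈ ExpPoly l ∧ VanishesToOrder Φ 0 n ∧ iteratedDeriv n Φ 0 = 1

/-- `Φ_{n,k}(x) = (hankelMatrix Φ x k).det`. -/
def hankelMatrix (Φ : ℝ → ℂ) (x : ℝ) (k : ℕ) : Matrix (Fin (k + 1)) (Fin (k + 1)) ℂ :=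
  Matrix.of fun i j => iteratedDeriv (i + j) Φ x

def derivComb (Φ : ℝ → ℂ) (a : ℝ) {N : ℕ} (w : Fin N → ℂ) : ℝ → ℂ :=
  ∑ j, w j • fun x => iteratedDeriv j Φ (x - a)

theorem iteratedDeriv_derivComb (hΦ : ContDiff ℝ (⊤ : ℕ∞) Φ) {N : ℕ} (w : Fin N → ℂ)
    (i : ℕ) (x : ℝ) :
    iteratedDeriv i (derivComb Φ a w) x =
      ∑ j : Fin N, iteratedDeriv (i + j) Φ (x - a) * w j := by
  have hsmooth : ∀ j : ℕ, ContDiff ℝ (⊤ : ℕ∞) (iteratedDeriv j Φ) := fun j => by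
    rw [iteratedDeriv_eq_iterate]; exact hΦ.iterate_deriv j
  rw [derivComb, iteratedDeriv_sum_smul (g := fun (j : Fin N) x => iteratedDeriv j Φ (x - a))
    fun j => (hsmooth j).comp (contDiff_id.sub contDiff_const)]
  simp only [iteratedDeriv_comp_sub_const, iteratedDeriv_iteratedDeriv]

theorem derivComb_mem (hΦ : Φ ∈ ExpPoly l) {N : ℕ} (w : Fin N → ℂ) :
    derivComb Φ a w ∈ ExpPoly l :=
  ExpPoly.sum_smul_mem w fun j => ExpPoly.comp_sub_const_mem (ExpPoly.iteratedDeriv_mem hΦ j) a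

theorem iteratedDeriv_derivComb_eq_mulVec (hΦ : ContDiff ℝ (⊤ : ℕ∞) Φ) {m : ℕ}
    (w : Fin (m + 1) → ℂ) (i : Fin (m + 1)) :
    iteratedDeriv i (derivComb Φ a w) b = (hankelMatrix Φ (b - a) m *ᵥ w) i :=
  iteratedDeriv_derivComb hΦ w i b

variable (hΦ : IsFundamental l n Φ) {m : ℕ} (hm : m ≤ n) (w : Fin (m + 1) → ℂ)
include hΦ hm

theorem derivComb_vanishesToOrder : VanishesToOrder (derivComb Φ a w) a (n - m) := by
  intro i hi
  rw [iteratedDeriv_derivComb hΦ.1.1, sub_self]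
  exact Finset.sum_eq_zero fun j _ => by rw [hΦ.2.1 _ (by omega), zero_mul]

theorem iteratedDeriv_derivComb_self_eq_last :
    iteratedDeriv (n - m) (derivComb Φ a w) a = w (Fin.last m) := by
  rw [iteratedDeriv_derivComb hΦ.1.1, sub_self,
    Finset.sum_eq_single (Fin.last m) (fun j _ hj => ?_) (by simp)]
  · rw [Fin.val_last, Nat.sub_add_cancel hm, hΦ.2.2, one_mul]
  · rw [hΦ.2.1 _ (by have := Fin.val_lt_last hj; omega), zero_mul]

theorem derivComb_ne_zero (hw : w ≠ 0) : derivComb Φ a w ≠ 0 := by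
  intro h0
  refine hw (funext fun j => eq_zero_of_triangular_sum_eq_zero
    (M := fun i (j : Fin (m + 1)) => iteratedDeriv (i + j) Φ 0) (d := fun j => n - j) (K := n + 1)
    ?_ ?_ ?_ ?_ j (by omega))
  · intro i j (hij : n - (i : ℕ) = n - j)
    have := i.isLt; have := j.isLt
    exact Fin.ext (by omega)
  · intro i j hij; exact hΦ.2.1 _ (by omega)
  · intro j; rw [Nat.sub_add_cancel (by omega), hΦ.2.2]; exact one_ne_zero
  · intro i _
    have := iteratedDeriv_derivComb (a := a) hΦ.1.1 w i a
    rwa [h0, iteratedDeriv_const_zero, sub_self, eq_comm] at this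

end Fundamental

section Characterization

variable {l : List ℂ} {n : ℕ} {Φ : ℝ → ℂ} {a b : ℝ}

theorem IsExtChebyshev.det_hankelMatrix_ne_zero (hl : l.length = n + 1) (hab : a ≠ b)
    (hΦ : IsFundamental l n Φ) (hC : IsExtChebyshev l {a, b}) {k : ℕ} (hk : k ≤ n) :
    (hankelMatrix Φ (b - a) k).det ≠ 0 := by
  intro hdet
  obtain ⟨w, hw0, hw⟩ := Matrix.exists_mulVec_eq_zero_iff.mpr hdet
  have hb : VanishesToOrder (derivComb Φ a w) b (k + 1) := fun i hi => by
    rw [iteratedDeriv_derivComb_eq_mulVec hΦ.1.1 w ⟨i, hi⟩, hw, Pi.zero_apply]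
  have := (isExtChebyshev_pair_iff hab).mp hC _ (derivComb_mem hΦ.1 w)
    (derivComb_ne_zero hΦ hk w hw0) _ _ (derivComb_vanishesToOrder hΦ hk w) hb
  omega

theorem exists_bernstein_function (hΦ : IsFundamental l n Φ)
    (hdet : ∀ k ≤ n, (hankelMatrix Φ (b - a) k).det ≠ 0) {m : ℕ} (hm : m ≤ n) :
    ∃ g ∈ ExpPoly l, HasZeroOfOrder g a (n - m) ∧ HasZeroOfOrder g b m ∧
      iteratedDeriv (n - m) g a = 1 := by
  set H := hankelMatrix Φ (b - a) m
  obtain ⟨w, hw⟩ := Matrix.mulVec_surjective_iff_isUnit.mpr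
    (H.isUnit_iff_isUnit_det.mpr (hdet m hm).isUnit) (Pi.single (Fin.last m) 1)
  have hsub : (H.submatrix Fin.castSucc Fin.castSucc).det ≠ 0 := by
    cases m with
    | zero => simp [Matrix.det_fin_zero]
    | succ m => exact hdet m (by omega)
  have hlast := Matrix.apply_last_ne_zero_of_mulVec_eq_single hsub hw
  have hb (i : Fin (m + 1)) :
      iteratedDeriv i (derivComb Φ a w) b =
        (Pi.single (Fin.last m) 1 : Fin (m + 1) → ℂ) i := by
    rw [iteratedDeriv_derivComb_eq_mulVec hΦ.1.1, hw]
  have ha := iteratedDeriv_derivComb_self_eq_last (a := a) hΦ hm w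
  refine ⟨(w (Fin.last m))⁻¹ • derivComb Φ a w, ExpPoly.smul_mem _ (derivComb_mem hΦ.1 w),
    ⟨fun j hj => ?_, ?_⟩, ⟨fun j hj => ?_, ?_⟩, ?_⟩ <;>
    simp only [iteratedDeriv_const_smul_field, smul_eq_mul]
  · rw [derivComb_vanishesToOrder hΦ hm w j hj, mul_zero]
  · rw [ha]; exact mul_ne_zero (inv_ne_zero hlast) hlast
  · rw [hb ⟨j, by omega⟩, Pi.single_apply, if_neg (Fin.ne_of_val_ne (by simp; omega)),
      mul_zero]
  · have hbm := hb (Fin.last m)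
    rw [Fin.val_last, Pi.single_eq_same] at hbm
    rw [hbm, mul_one]
    exact inv_ne_zero hlast
  · rw [ha, inv_mul_cancel₀ hlast]

theorem exists_isBernsteinBasis (hl : l.length = n + 1) (hΦ : IsFundamental l n Φ)
    (hdet : ∀ k ≤ n, (hankelMatrix Φ (b - a) k).det ≠ 0) :
    ∃ p : ℕ → ℝ → ℂ, IsBernsteinBasis l a b p := by
  choose! p hp using fun k (hk : k ≤ n) => exists_bernstein_function hΦ hdet (Nat.sub_le n k)
  refine ⟨p, fun k hk => ?_⟩
  rw [hl, Nat.add_sub_cancel] at hk ⊢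
  simpa only [Nat.sub_sub_self hk] using hp k hk

theorem IsBernsteinBasis.isExtChebyshev {p : ℕ → ℝ → ℂ} (hl : l.length = n + 1)
    (hab : a ≠ b) (hp : IsBernsteinBasis l a b p) : IsExtChebyshev l {a, b} := by
  have hp' (j : Fin (n + 1)) : p j ∈ ExpPoly l ∧ HasZeroOfOrder (p j) a j ∧
      HasZeroOfOrder (p j) b (n - j) := by
    have hpj := hp j (by omega)
    simp only [hl, Nat.add_sub_cancel] at hpj
    exact ⟨hpj.1, hpj.2.1, hpj.2.2.1⟩
  have hcoeff_a {c : Fin (n + 1) → ℂ} {K : ℕ}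
      (hc : ∀ i < K, ∑ j : Fin (n + 1), iteratedDeriv i (p j) a * c j = 0) (j : Fin (n + 1))
      (hj : (j : ℕ) < K) : c j = 0 :=
    eq_zero_of_triangular_sum_eq_zero Fin.val_injective (fun i j => (hp' j).2.1.1 i)
      (fun j => (hp' j).2.1.2) hc j hj
  rw [isExtChebyshev_pair_iff hab, hl, Nat.add_sub_cancel]
  intro f hf hf0 α β hα hβ
  by_contra! hlt
  have hsmooth (j : Fin (n + 1)) := (hp' j).1.1
  obtain ⟨c, rfl⟩ := ExpPoly.exists_eq_sum_smul hl (fun j => (hp' j).1)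
    (fun c hc => funext fun j => hcoeff_a hc j j.isLt) hf
  have hca := hcoeff_a (c := c) (K := α) fun i hi => by
    rw [← iteratedDeriv_sum_smul hsmooth, hα i hi]
  have hcb := eq_zero_of_triangular_sum_eq_zero
    (M := fun i (j : Fin (n + 1)) => iteratedDeriv i (p j) b) (d := fun j => n - j) (K := β)
    (fun i j (hij : n - (i : ℕ) = n - j) => Fin.ext (by omega))
    (fun i j => (hp' j).2.2.1 i) (fun j => (hp' j).2.2.2) fun i hi => by
      rw [← iteratedDeriv_sum_smul hsmooth, hβ i hi]
  refine hf0 (Finset.sum_eq_zero fun j _ => ?_)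
  by_cases hj : (j : ℕ) < α
  · rw [hca j hj, zero_smul]
  · rw [hcb j (by omega), zero_smul]

end Characterization

/-- **Theorem (characterization of Bernstein bases).**
Let `Λ = (λ_0,…,λ_n) ∈ ℂ^{n+1}` and `a ≠ b` real.  Let `Φ` be the fundamental
function of `E_Λ` (the unique element with `Φ(0) = ⋯ = Φ^{(n−1)}(0) = 0`,
`Φ^{(n)}(0) = 1`).  Then the following are equivalent:
(a) there exists a Bernstein basis of `E_Λ` for `{a,b}`;
(b) `E_Λ` is an extended Chebyshev system for `{a,b}`;
(c) `Φ_{n,k}(b − a) ≠ 0` for all `k = 0,…,n`, where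
`Φ_{n,k}(x) = det (Φ^{(i+j)}(x))_{0 ≤ i,j ≤ k}`. -/
theorem bernstein_basis_characterization
    (n : ℕ) (l : List ℂ) (hl : l.length = n + 1)
    (a b : ℝ) (hab : a ≠ b) (Φ : ℝ → ℂ)
    (hΦmem : Φ ∈ ExpPoly l)
    (hΦzero : ∀ j < n, iteratedDeriv j Φ 0 = 0)
    (hΦnorm : iteratedDeriv n Φ 0 = 1) :
    ((∃ p : ℕ → ℝ → ℂ, IsBernsteinBasis l a b p) ↔ IsExtChebyshev l {a, b}) ∧
    (IsExtChebyshev l {a, b} ↔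
      ∀ k ≤ n, Matrix.det (Matrix.of fun i j : Fin (k + 1) =>
        iteratedDeriv ((i : ℕ) + (j : ℕ)) Φ (b - a)) ≠ 0) := by
  have hΦ : IsFundamental l n Φ := ⟨hΦmem, hΦzero, hΦnorm⟩
  have a_to_b : (∃ p, IsBernsteinBasis l a b p) → IsExtChebyshev l {a, b} :=
    fun ⟨_, hp⟩ => hp.isExtChebyshev hl hab
  have b_to_c : IsExtChebyshev l {a, b} → ∀ k ≤ n, (hankelMatrix Φ (b - a) k).det ≠ 0 :=
    fun hC _ hk => hC.det_hankelMatrix_ne_zero hl hab hΦ hk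
  have c_to_a :
      (∀ k ≤ n, (hankelMatrix Φ (b - a) k).det ≠ 0) → ∃ p, IsBernsteinBasis l a b p :=
    exists_isBernsteinBasis hl hΦ
  exact ⟨⟨a_to_b, fun hC => c_to_a (b_to_c hC)⟩, ⟨b_to_c, fun h => a_to_b (c_to_a h)⟩⟩
end
end

section
/- Let c ∈ ℂ and write c + Λ_n := (c+λ_0,…,c+λ_n). If there exists a Bernstein basis p_{Λ_n,k}, k = 0,…,n, of E_{Λ_n} for a ≠ b, then there exists a Bernstein basis of E_{c+Λ_n} for a ≠ b, given by p_{c+Λ_n,k}(x) = p_{Λ_n,k}(x) e^{c(x−a)} for k = 0,…,n. -/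
open Filter Topology Set

noncomputable section

/-! Multiplication by `e(x) = e^{c(x-a)}` intertwines `d/dx - (c + λ)` with `d/dx - λ`, so it
maps `E_Λ` into `E_{c+Λ}`. Since `e` never vanishes and `e(a) = 1`, Leibniz's rule shows that it
preserves the order of every zero and the normalization `p_k^{(k)}(a) = 1`. -/

theorem iteratedDeriv_fun_mul_eq_of_forall_lt {𝕜 𝔸 : Type*} [NontriviallyNormedField 𝕜]
    [NormedRing 𝔸] [NormedAlgebra 𝕜 𝔸] {f g : 𝕜 → 𝔸} {x : 𝕜} {k : ℕ}
    (hf : ContDiffAt 𝕜 k f x) (hg : ContDiffAt 𝕜 k g x)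
    (hf0 : ∀ j < k, iteratedDeriv j f x = 0) :
    iteratedDeriv k (fun y => f y * g y) x = iteratedDeriv k f x * g x := by
  rw [iteratedDeriv_fun_mul hf hg, Finset.sum_range_succ,
    Finset.sum_eq_zero fun j hj => by rw [hf0 j (Finset.mem_range.mp hj)]; simp]
  simp

theorem HasZeroOfOrder.mul_of_ne_zero {f g : ℝ → ℂ} {x₀ : ℝ} {k : ℕ}
    (hf : HasZeroOfOrder f x₀ k) (hfs : ContDiffAt ℝ k f x₀) (hgs : ContDiffAt ℝ k g x₀)
    (hg : g x₀ ≠ 0) :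
    HasZeroOfOrder (fun x => f x * g x) x₀ k := by
  have hmul : ∀ j ≤ k, iteratedDeriv j (fun x => f x * g x) x₀ = iteratedDeriv j f x₀ * g x₀ :=
    fun j hj => iteratedDeriv_fun_mul_eq_of_forall_lt (hfs.of_le (mod_cast hj))
      (hgs.of_le (mod_cast hj)) fun i hi => hf.1 i (hi.trans_le hj)
  refine ⟨fun j hj => ?_, ?_⟩
  · rw [hmul j hj.le, hf.1 j hj, zero_mul]
  · rw [hmul k le_rfl]
    exact mul_ne_zero hf.2 hg

section Shift

variable {c : ℂ} {e : ℝ → ℂ}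

theorem deriv_fun_mul_sub_add_mul (he : ∀ x, HasDerivAt e (c * e x) x) {f : ℝ → ℂ}
    (hf : Differentiable ℝ f) (μ : ℂ) :
    (fun x => deriv (fun y => f y * e y) x - (c + μ) * (f x * e x))
      = fun x => (deriv f x - μ * f x) * e x := by
  funext x
  rw [deriv_fun_mul (hf x) (he x).differentiableAt, (he x).deriv]
  ring

theorem LOp_map_add_fun_mul (he : ∀ x, HasDerivAt e (c * e x) x) (l : List ℂ) {f : ℝ → ℂ}
    (hf : ContDiff ℝ (⊤ : ℕ∞) f) :
    LOp (l.map fun z => c + z) (fun x => f x * e x) = fun x => LOp l f x * e x := by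
  induction l generalizing f with
  | nil => rfl
  | cons μ l ih =>
    have hf' := contDiff_infty_iff_deriv.mp hf
    simp only [List.map_cons, LOp]
    rw [deriv_fun_mul_sub_add_mul he hf'.1 μ, ih (hf'.2.sub (contDiff_const.mul hf))]

end Shift

theorem hasDerivAt_cexp_mul_sub (c : ℂ) (a x : ℝ) :
    HasDerivAt (fun y : ℝ => Complex.exp (c * ((y : ℂ) - a)))
      (c * Complex.exp (c * ((x : ℂ) - a))) x := by
  have hlin : HasDerivAt (fun y : ℝ => c * ((y : ℂ) - a)) c x := by
    simpa using ((Complex.ofRealCLM.hasDerivAt (x := x)).sub_const (a : ℂ)).const_mul c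
  simpa [mul_comm] using hlin.cexp

theorem contDiff_cexp_mul_sub (c : ℂ) (a : ℝ) {n : WithTop ℕ∞} :
    ContDiff ℝ n (fun y : ℝ => Complex.exp (c * ((y : ℂ) - a))) :=
  (contDiff_const.mul (Complex.ofRealCLM.contDiff.sub contDiff_const)).cexp

theorem fun_mul_cexp_mem_expPoly_map_add {l : List ℂ} {f : ℝ → ℂ} (hf : f ∈ ExpPoly l)
    (c : ℂ) (a : ℝ) :
    (fun x => f x * Complex.exp (c * ((x : ℂ) - a))) ∈ ExpPoly (l.map fun z => c + z) := by
  refine ⟨hf.1.mul (contDiff_cexp_mul_sub c a), ?_⟩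
  rw [LOp_map_add_fun_mul (hasDerivAt_cexp_mul_sub c a) l hf.1, hf.2]
  exact funext fun x => zero_mul _

theorem bernstein_basis_shift_general (l : List ℂ) (c : ℂ) (a b : ℝ)
    (p : ℕ → ℝ → ℂ) (hp : IsBernsteinBasis l a b p) :
    IsBernsteinBasis (l.map fun z => c + z) a b
      (fun k x => p k x * Complex.exp (c * ((x : ℂ) - (a : ℂ)))) := by
  intro k hk
  rw [List.length_map] at hk ⊢
  obtain ⟨hpk, hza, hzb, hnorm⟩ := hp k hk
  have hsmooth : ∀ (n : ℕ) (x : ℝ), ContDiffAt ℝ n (p k) x := fun n x =>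
    (hpk.1.of_le (mod_cast le_top)).contDiffAt
  have hexp : ∀ (n : ℕ) (x : ℝ), ContDiffAt ℝ n (fun y : ℝ => Complex.exp (c * (y - a))) x :=
    fun n x => (contDiff_cexp_mul_sub c a).contDiffAt
  refine ⟨fun_mul_cexp_mem_expPoly_map_add hpk c a,
    hza.mul_of_ne_zero (hsmooth k a) (hexp k a) (Complex.exp_ne_zero _),
    hzb.mul_of_ne_zero (hsmooth _ b) (hexp _ b) (Complex.exp_ne_zero _), ?_⟩
  rw [iteratedDeriv_fun_mul_eq_of_forall_lt (hsmooth k a) (hexp k a) hza.1, hnorm]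
  simp

/-- **Proposition.** Let `c ∈ ℂ` and `c + Λ_n := (c+λ_0,…,c+λ_n)`.  If `p k`,
`k = 0,…,n`, is a Bernstein basis of `E_{Λ_n}` for `a ≠ b`, then
`x ↦ p k (x) · e^{c(x−a)}`, `k = 0,…,n`, is a Bernstein basis of `E_{c+Λ_n}`
for `a ≠ b`. -/
theorem bernstein_basis_shift (l : List ℂ) (c : ℂ) (a b : ℝ) (hab : a ≠ b)
    (p : ℕ → ℝ → ℂ) (hp : IsBernsteinBasis l a b p) :
    IsBernsteinBasis (l.map fun z => c + z) a b
      (fun k x => p k x * Complex.exp (c * ((x : ℂ) - (a : ℂ)))) :=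
  bernstein_basis_shift_general l c a b p hp
end
end

section
/- Suppose E_{(λ_0,…,λ_{n−1},λ_n)}, E_{(λ_0,…,λ_{n−1},η_n)} and E_{(λ_0,…,λ_{n−1})} are extended Chebyshev systems for {a,b}, a ≠ b ∈ ℝ. If for some fixed k ∈ {0,…,n} the Bernstein basis functions satisfy p_{(λ_0,…,λ_{n−1},λ_n),k}(x) = p_{(λ_0,…,λ_{n−1},η_n),k}(x) for all x ∈ (a,b), then λ_n = η_n. -/
open Filter Topology Set

noncomputable section

/-!
Apply `L = (d/dx − λ₀)⋯(d/dx − λ_{n−1})` to the common Bernstein function: `u = L p_k`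
solves `u' = λₙ u` and `L q_k` solves `u' = ηₙ u`, and the two agree on the interval.
If `u` vanished at a single point it would vanish identically, putting `p_k` in
`E_{(λ₀,…,λ_{n−1})}` with `k + (n − k) = n` zeros at `{a, b}`, which the Chebyshev property
of that space forbids. Hence `u` vanishes nowhere and `λₙ u = u' = ηₙ u` forces `λₙ = ηₙ`.
-/

lemma LOp_contDiff (l : List ℂ) {f : ℝ → ℂ} (hf : ContDiff ℝ (⊤ : ℕ∞) f) :
    ContDiff ℝ (⊤ : ℕ∞) (LOp l f) := by
  induction l generalizing f with
  | nil => exact hf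
  | cons c r ih => exact ih (((contDiff_infty_iff_deriv.mp hf).2).sub (contDiff_const.mul hf))

lemma LOp_eqOn (l : List ℂ) {s : Set ℝ} (hs : IsOpen s) {f g : ℝ → ℂ} (h : EqOn f g s) :
    EqOn (LOp l f) (LOp l g) s := by
  induction l generalizing f g with
  | nil => exact h
  | cons c r ih =>
    refine ih fun x hx => ?_
    have hd : deriv f x = deriv g x :=
      Filter.EventuallyEq.deriv_eq (Filter.eventually_of_mem (hs.mem_nhds hx) h)
    simp only [hd, h hx]

lemma LOp_append_singleton (l : List ℂ) (c : ℂ) (f : ℝ → ℂ) :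
    LOp (l ++ [c]) f = fun x => deriv (LOp l f) x - c * LOp l f x := by
  induction l generalizing f with
  | nil => rfl
  | cons d r ih => exact ih _

lemma deriv_LOp_eq_mul {l : List ℂ} {c : ℂ} {f : ℝ → ℂ} (hf : f ∈ ExpPoly (l ++ [c])) (x : ℝ) :
    deriv (LOp l f) x = c * LOp l f x := by
  have h := congrFun hf.2 x
  rw [LOp_append_singleton] at h
  exact sub_eq_zero.mp h

lemma eq_zero_of_deriv_eq_mul_s9 {u : ℝ → ℂ} {c : ℂ} (hu : Differentiable ℝ u)
    (hde : ∀ x, deriv u x = c * u x) {x₀ : ℝ} (h₀ : u x₀ = 0) : u = 0 := by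
  set w : ℝ → ℂ := fun x => Complex.exp (-(c * x)) * u x
  have hw : ∀ x, HasDerivAt w 0 x := by
    intro x
    have hexp : HasDerivAt (fun y : ℝ => Complex.exp (-(c * y))) (Complex.exp (-(c * x)) * -c) x :=
      ((((hasDerivAt_id x).ofReal_comp).const_mul c).neg.congr_deriv (by simp)).cexp
    have hux : HasDerivAt u (c * u x) x := hde x ▸ (hu x).hasDerivAt
    exact (hexp.mul hux).congr_deriv (by ring)
  funext x
  have hwx : w x = w x₀ :=
    is_const_of_deriv_eq_zero (fun y => (hw y).differentiableAt) (fun y => (hw y).deriv) x x₀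
  simpa [w, h₀, Complex.exp_ne_zero] using hwx

lemma eq_zero_of_isExtChebyshev {l : List ℂ} {a b : ℝ} (hab : a ≠ b)
    (hl : IsExtChebyshev l {a, b}) {f : ℝ → ℂ} (hf : f ∈ ExpPoly l) {i j : ℕ}
    (hij : l.length ≤ i + j) (ha : ∀ m < i, iteratedDeriv m f a = 0)
    (hb : ∀ m < j, iteratedDeriv m f b = 0) : f = 0 := by
  classical
  obtain rfl | hne := eq_or_ne l []
  · exact hf.2
  by_contra hf0
  have hsum := hl f hf hf0 {a, b} (fun x => if x = a then i else j) (by simp)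
    (by
      simp only [Finset.mem_insert, Finset.mem_singleton]
      rintro x (rfl | rfl) m hm
      · exact ha m (by simpa using hm)
      · exact hb m (by simpa [hab.symm] using hm))
  rw [Finset.sum_pair hab, if_pos rfl, if_neg hab.symm] at hsum
  have := List.length_pos_iff.mpr hne
  omega

lemma notMem_expPoly_of_isBernsteinBasis {l : List ℂ} {c : ℂ} {a b : ℝ} (hab : a ≠ b)
    (hl : IsExtChebyshev l {a, b}) {p : ℕ → ℝ → ℂ} (hp : IsBernsteinBasis (l ++ [c]) a b p)
    {k : ℕ} (hk : k ≤ l.length) : p k ∉ ExpPoly l := by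
  intro hpl
  obtain ⟨-, ⟨hpa, -⟩, ⟨hpb, -⟩, hpk⟩ := hp k (by simpa using hk)
  have hp0 : p k = 0 :=
    eq_zero_of_isExtChebyshev hab hl hpl (i := k) (j := l.length - k) (by omega) hpa
      (by simpa using hpb)
  simp [hp0] at hpk

lemma eq_of_deriv_eq_mul_of_eqOn {u v : ℝ → ℂ} {c d : ℂ} {s : Set ℝ} (hs : IsOpen s)
    (hu : ∀ x, deriv u x = c * u x) (hv : ∀ x, deriv v x = d * v x) (huv : EqOn u v s)
    {x : ℝ} (hx : x ∈ s) (hux : u x ≠ 0) : c = d := by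
  have hd : deriv u x = deriv v x :=
    Filter.EventuallyEq.deriv_eq (Filter.eventually_of_mem (hs.mem_nhds hx) huv)
  refine mul_right_cancel₀ hux ?_
  rw [← hu, hd, hv, ← huv hx]

theorem eigenvalue_determined_by_bernstein_function_general
    (n : ℕ) (l' : List ℂ) (hl' : l'.length = n) (lamn etan : ℂ)
    (a b : ℝ) (hab : a ≠ b)
    (h3 : IsExtChebyshev l' {a, b})
    (p q : ℕ → ℝ → ℂ)
    (hp : IsBernsteinBasis (l' ++ [lamn]) a b p)
    (hq : IsBernsteinBasis (l' ++ [etan]) a b q)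
    (k : ℕ) (hk : k ≤ n)
    (heq : ∀ x ∈ Set.uIoo a b, p k x = q k x) :
    lamn = etan := by
  have hpE := (hp k (by simp [hl', hk])).1
  have hqE := (hq k (by simp [hl', hk])).1
  obtain ⟨x, hx⟩ : (uIoo a b).Nonempty := nonempty_Ioo.mpr (min_lt_max.mpr hab)
  have hux : LOp l' (p k) x ≠ 0 := by
    intro h0
    have hLp : LOp l' (p k) = 0 := eq_zero_of_deriv_eq_mul_s9
      ((LOp_contDiff l' hpE.1).differentiable (by simp)) (deriv_LOp_eq_mul hpE) h0
    exact notMem_expPoly_of_isBernsteinBasis hab h3 hp (hl' ▸ hk) ⟨hpE.1, hLp⟩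
  exact eq_of_deriv_eq_mul_of_eqOn isOpen_Ioo (deriv_LOp_eq_mul hpE) (deriv_LOp_eq_mul hqE)
    (LOp_eqOn l' isOpen_Ioo heq) hx hux

/-- **Proposition.** Suppose `E_{(λ_0,…,λ_{n−1},λ_n)}`, `E_{(λ_0,…,λ_{n−1},η_n)}` and
`E_{(λ_0,…,λ_{n−1})}` are extended Chebyshev systems for `{a,b}`, `a ≠ b ∈ ℝ`.
If for some fixed `k ∈ {0,…,n}` the Bernstein basis functions satisfy
`p_{(λ_0,…,λ_{n−1},λ_n),k} = p_{(λ_0,…,λ_{n−1},η_n),k}` on the open interval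
between `a` and `b`, then `λ_n = η_n`. -/
theorem eigenvalue_determined_by_bernstein_function
    (n : ℕ) (l' : List ℂ) (hl' : l'.length = n) (lamn etan : ℂ)
    (a b : ℝ) (hab : a ≠ b)
    (h1 : IsExtChebyshev (l' ++ [lamn]) {a, b})
    (h2 : IsExtChebyshev (l' ++ [etan]) {a, b})
    (h3 : IsExtChebyshev l' {a, b})
    (p q : ℕ → ℝ → ℂ)
    (hp : IsBernsteinBasis (l' ++ [lamn]) a b p)
    (hq : IsBernsteinBasis (l' ++ [etan]) a b q)
    (k : ℕ) (hk : k ≤ n)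
    (heq : ∀ x ∈ Set.uIoo a b, p k x = q k x) :
    lamn = etan :=
  eigenvalue_determined_by_bernstein_function_general n l' hl' lamn etan a b hab h3 p q hp hq k hk
    heq
end
end

section
/- Suppose ω ≠ 0 is a complex number and λ_j = λ_0 + jω for j = 0,…,n. Then the functions p_{n,k}(x) := (e^{λ_0(x−a)} / (k! ω^k)) (e^{ω(x−a)} − 1)^k ((1 − e^{ω(x−b)}) / (1 − e^{ω(a−b)}))^{n−k}, k = 0,…,n, belong to E_{(λ_0,…,λ_n)} and form a Bernstein basis for a ≠ b satisfying the normalization k! · lim_{x→a} p_{n,k}(x)/(x−a)^k = 1. -/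
open Filter Topology Set

noncomputable section

/-- The explicit Bernstein basis for equidistant eigenvalues `λ_j = λ_0 + jω`:
`p_{n,k}(x) = (e^{λ_0(x−a)}/(k! ω^k)) (e^{ω(x−a)} − 1)^k
  ((1 − e^{ω(x−b)})/(1 − e^{ω(a−b)}))^{n−k}`. -/
def equidistantBernstein (n : ℕ) (lam0 ω : ℂ) (a b : ℝ) (k : ℕ) (x : ℝ) : ℂ :=
  Complex.exp (lam0 * ((x : ℂ) - (a : ℂ))) / ((k.factorial : ℂ) * ω ^ k) *
    (Complex.exp (ω * ((x : ℂ) - (a : ℂ))) - 1) ^ k *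
    ((1 - Complex.exp (ω * ((x : ℂ) - (b : ℂ)))) /
      (1 - Complex.exp (ω * ((a : ℂ) - (b : ℂ))))) ^ (n - k)

/-!
Writing `E = e^{ωx}`, each `p_{n,k}` is `e^{λ₀x} R(E)` for a polynomial `R` of degree `≤ n`, and
`(d/dx − c)(e^{cx} R(E)) = e^{(c+ω)x} (ωR')(E)`: the factors `d/dx − λ_j`, `j = 0,…,n`,
differentiate `R` `n + 1` times and so annihilate it.

For the zeros, extend `p_{n,k}` to an entire function. Since `e^{ω(z−a)} − 1` has a simple zero
at `a` with derivative `ω`, the extension factors as `(z − a)^k φ(z)` with `φ` entire and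
`φ(a) = 1/k!`, and likewise as `(z − b)^{n−k} ψ(z)` with `ψ(b) ≠ 0`. The iterated derivatives of
`(z − c)^m φ` at `c` vanish below order `m` and equal `m! φ(c)` at order `m`, and
`p_{n,k}(x)/(x − a)^k = φ(x) → 1/k!`.
-/

open Polynomial

section OrderOfVanishing

theorem Complex.differentiable_dslope {E : Type*} [NormedAddCommGroup E] [NormedSpace ℂ E]
    [CompleteSpace E] {f : ℂ → E} (hf : Differentiable ℂ f) (c : ℂ) :
    Differentiable ℂ (dslope f c) := by
  rw [← differentiableOn_univ] at hf ⊢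
  exact (Complex.differentiableOn_dslope Filter.univ_mem).2 hf

theorem mul_pow_eq_sub_pow_mul_dslope {𝕜 : Type*} [NontriviallyNormedField 𝕜] {g u : 𝕜 → 𝕜}
    {c : 𝕜} (hu : u c = 0) (k : ℕ) (z : 𝕜) :
    g z * u z ^ k = (z - c) ^ k * (g z * dslope u c z ^ k) := by
  rw [← sub_smul_dslope_of_zero hu z, smul_eq_mul, mul_pow]
  ring

theorem iteratedDeriv_comp_ofReal {H : ℂ → ℂ} (hH : Differentiable ℂ H) (m : ℕ) (x : ℝ) :
    iteratedDeriv m (fun t : ℝ => H t) x = iteratedDeriv m H x := by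
  induction m generalizing x with
  | zero => simp
  | succ m ih =>
    rw [iteratedDeriv_succ, iteratedDeriv_succ, funext ih]
    exact ((hH.contDiff.differentiable_iteratedDeriv m (WithTop.coe_lt_top _) x).hasDerivAt
      |>.comp_ofReal).deriv

variable {g u : ℂ → ℂ}

theorem iteratedDeriv_ofReal_mul_pow_of_lt (hg : Differentiable ℂ g) (hu : Differentiable ℂ u)
    {x₀ : ℝ} (hu0 : u x₀ = 0) {j k : ℕ} (hjk : j < k) :
    iteratedDeriv j (fun x : ℝ => g x * u x ^ k) x₀ = 0 := by
  obtain ⟨t, rfl⟩ : ∃ t, k = j + (t + 1) := ⟨k - j - 1, by omega⟩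
  obtain ⟨R₂, -, h⟩ := iteratedDeriv_mul_pow_sub_of_analytic (k := j) (t := t + 1)
    (fun z => (hg.mul ((Complex.differentiable_dslope hu x₀).pow _)).analyticAt z)
    (mul_pow_eq_sub_pow_mul_dslope hu0 _)
  rw [iteratedDeriv_comp_ofReal (H := fun z => g z * u z ^ _) (hg.mul (hu.pow _)), h, sub_self,
    zero_pow t.succ_ne_zero, zero_mul]

theorem iteratedDeriv_ofReal_mul_pow_self (hg : Differentiable ℂ g) (hu : Differentiable ℂ u)
    {x₀ : ℝ} (hu0 : u x₀ = 0) (k : ℕ) :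
    iteratedDeriv k (fun x : ℝ => g x * u x ^ k) x₀ = k.factorial * g x₀ * deriv u x₀ ^ k := by
  obtain ⟨R₂, -, h⟩ := iteratedDeriv_mul_pow_sub_of_analytic (k := k) (t := 0)
    (fun z => (hg.mul ((Complex.differentiable_dslope hu x₀).pow _)).analyticAt z)
    (mul_pow_eq_sub_pow_mul_dslope hu0 _)
  rw [iteratedDeriv_comp_ofReal (H := fun z => g z * u z ^ k) (hg.mul (hu.pow _))]
  simpa [dslope_same, mul_assoc] using h x₀

theorem hasZeroOfOrder_mul_pow (hg : Differentiable ℂ g) (hu : Differentiable ℂ u) {x₀ : ℝ}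
    (hu0 : u x₀ = 0) (hg0 : g x₀ ≠ 0) (hu' : deriv u x₀ ≠ 0) (k : ℕ) :
    HasZeroOfOrder (fun x : ℝ => g x * u x ^ k) x₀ k := by
  refine ⟨fun j hj => iteratedDeriv_ofReal_mul_pow_of_lt hg hu hu0 hj, ?_⟩
  rw [iteratedDeriv_ofReal_mul_pow_self hg hu hu0]
  exact mul_ne_zero (mul_ne_zero (Nat.cast_ne_zero.2 k.factorial_ne_zero) hg0) (pow_ne_zero k hu')

theorem tendsto_mul_pow_div_sub_pow (hg : Continuous g) (hu : Differentiable ℂ u) {x₀ : ℝ}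
    (hu0 : u x₀ = 0) (k : ℕ) :
    Tendsto (fun x : ℝ => g x * u x ^ k / ((x : ℂ) - x₀) ^ k) (𝓝[≠] x₀)
      (𝓝 (g x₀ * deriv u x₀ ^ k)) := by
  have hφ : Continuous fun x : ℝ => g x * dslope u x₀ x ^ k :=
    (hg.mul ((Complex.differentiable_dslope hu _).continuous.pow k)).comp
      Complex.continuous_ofReal
  rw [← dslope_same]
  refine (hφ.tendsto x₀).mono_left nhdsWithin_le_nhds |>.congr' ?_
  filter_upwards [self_mem_nhdsWithin] with x hx
  have hx' : (x : ℂ) - x₀ ≠ 0 := sub_ne_zero.2 (Complex.ofReal_injective.ne hx)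
  rw [mul_pow_eq_sub_pow_mul_dslope hu0, mul_div_cancel_left₀ _ (pow_ne_zero k hx')]

end OrderOfVanishing

section EquidistantSpectrum

variable (c ω : ℂ)

def expMulEvalExp (R : ℂ[X]) (x : ℝ) : ℂ :=
  Complex.exp (c * x) * R.eval (Complex.exp (ω * x))

theorem contDiff_expMulEvalExp (R : ℂ[X]) : ContDiff ℝ (⊤ : ℕ∞) (expMulEvalExp c ω R) := by
  have hofReal : ContDiff ℝ (⊤ : ℕ∞) ((↑) : ℝ → ℂ) := Complex.ofRealCLM.contDiff
  have hR : ContDiff ℝ (⊤ : ℕ∞) fun z => R.eval z := R.differentiable.contDiff.restrict_scalars ℝ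
  unfold expMulEvalExp
  fun_prop

theorem deriv_expMulEvalExp_sub (R : ℂ[X]) (x : ℝ) :
    deriv (expMulEvalExp c ω R) x - c * expMulEvalExp c ω R x =
      expMulEvalExp (c + ω) ω (C ω * derivative R) x := by
  have hlin : ∀ μ : ℂ, HasDerivAt (fun t : ℝ => μ * t) μ x := fun μ => by
    simpa using ((hasDerivAt_id x).ofReal_comp).const_mul μ
  have h := (hlin c).cexp.mul ((R.hasDerivAt _).comp x (hlin ω).cexp)
  rw [show deriv (expMulEvalExp c ω R) x = _ from h.deriv]
  simp only [expMulEvalExp, Function.comp_apply, eval_mul, eval_C, add_mul, Complex.exp_add]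
  ring

theorem LOp_ofFn_expMulEvalExp (m : ℕ) (R : ℂ[X]) :
    LOp (List.ofFn fun j : Fin m => c + (j : ℕ) * ω) (expMulEvalExp c ω R) =
      expMulEvalExp (c + m * ω) ω (C (ω ^ m) * derivative^[m] R) := by
  induction m generalizing c R with
  | zero => simp [LOp]
  | succ m ih =>
    have hstep : (fun x => deriv (expMulEvalExp c ω R) x - (c + ((0 : Fin (m + 1)) : ℕ) * ω) *
        expMulEvalExp c ω R x) = expMulEvalExp (c + ω) ω (C ω * derivative R) := by
      funext x
      simpa using deriv_expMulEvalExp_sub c ω R x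
    have hshift : (fun j : Fin m => c + ((j.succ : ℕ) : ℂ) * ω) =
        fun j : Fin m => (c + ω) + (j : ℕ) * ω := by
      funext j
      simp only [Fin.val_succ]
      push_cast
      ring
    rw [List.ofFn_succ, LOp, hstep, hshift, ih, iterate_derivative_C_mul,
      ← Function.iterate_succ_apply, ← mul_assoc, ← C_mul, ← pow_succ]
    congr 1
    push_cast
    ring

theorem expMulEvalExp_mem_expPoly {n : ℕ} {R : ℂ[X]} (hR : R.natDegree ≤ n) :
    expMulEvalExp c ω R ∈ ExpPoly (List.ofFn fun j : Fin (n + 1) => c + (j : ℕ) * ω) := by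
  refine ⟨contDiff_expMulEvalExp c ω R, ?_⟩
  rw [LOp_ofFn_expMulEvalExp, iterate_derivative_eq_zero (Nat.lt_succ_of_le hR)]
  funext x
  simp [expMulEvalExp]

end EquidistantSpectrum

namespace equidistantBernstein

variable {n : ℕ} {lam0 ω : ℂ} {a b : ℝ} {k : ℕ}

variable (lam0 ω a b k) in
def weight (z : ℂ) : ℂ := Complex.exp (lam0 * (z - a)) / (k.factorial * ω ^ k)

variable (ω a) in
def leftFactor (z : ℂ) : ℂ := Complex.exp (ω * (z - a)) - 1

variable (ω a b) in
def rightFactor (z : ℂ) : ℂ :=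
  (1 - Complex.exp (ω * (z - b))) / (1 - Complex.exp (ω * (a - b)))

theorem eq_weight_mul_rightFactor_mul_leftFactor :
    equidistantBernstein n lam0 ω a b k =
      fun x : ℝ =>
        (weight lam0 ω a k x * rightFactor ω a b x ^ (n - k)) * leftFactor ω a x ^ k := by
  funext x
  simp only [equidistantBernstein, weight, leftFactor, rightFactor]
  ring

theorem eq_weight_mul_leftFactor_mul_rightFactor :
    equidistantBernstein n lam0 ω a b k =
      fun x : ℝ => (weight lam0 ω a k x * leftFactor ω a x ^ k) * rightFactor ω a b x ^ (n - k) :=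
  rfl

theorem differentiable_weight : Differentiable ℂ (weight lam0 ω a k) := by
  unfold weight
  fun_prop

theorem differentiable_leftFactor : Differentiable ℂ (leftFactor ω a) := by
  unfold leftFactor
  fun_prop

theorem differentiable_rightFactor : Differentiable ℂ (rightFactor ω a b) := by
  unfold rightFactor
  fun_prop

theorem weight_ne_zero (hω : ω ≠ 0) (z : ℂ) : weight lam0 ω a k z ≠ 0 := by
  simp [weight, hω, Nat.factorial_ne_zero]

theorem leftFactor_self : leftFactor ω a a = 0 := by
  simp [leftFactor]

theorem rightFactor_self : rightFactor ω a b b = 0 := by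
  simp [rightFactor]

theorem deriv_leftFactor_self : deriv (leftFactor ω a) a = ω := by
  show deriv (fun z : ℂ => Complex.exp (ω * (z - a)) - 1) a = ω
  have h := (((hasDerivAt_id (a : ℂ)).sub_const (a : ℂ)).const_mul ω).cexp.sub_const 1
  simpa using h.deriv

theorem deriv_rightFactor_self :
    deriv (rightFactor ω a b) b = -ω / (1 - Complex.exp (ω * (a - b))) := by
  show deriv (fun z : ℂ => (1 - Complex.exp (ω * (z - b))) / (1 - Complex.exp (ω * (a - b)))) b = _
  have h := ((((hasDerivAt_id (b : ℂ)).sub_const (b : ℂ)).const_mul ω).cexp.const_sub 1).div_const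
    (1 - Complex.exp (ω * (a - b)))
  simpa using h.deriv

theorem rightFactor_left_eq_one (hne : Complex.exp (ω * ((a : ℂ) - (b : ℂ))) ≠ 1) :
    rightFactor ω a b a = 1 :=
  div_self (sub_ne_zero.2 hne.symm)

theorem leftFactor_right_ne_zero (hne : Complex.exp (ω * ((a : ℂ) - (b : ℂ))) ≠ 1) :
    leftFactor ω a b ≠ 0 := by
  rw [leftFactor, sub_ne_zero]
  contrapose! hne
  rw [show ω * ((a : ℂ) - b) = -(ω * (b - a)) by ring, Complex.exp_neg, hne, inv_one]

theorem factorial_mul_weight_mul_deriv_pow_eq_one (hω : ω ≠ 0)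
    (hne : Complex.exp (ω * ((a : ℂ) - (b : ℂ))) ≠ 1) :
    (k.factorial : ℂ) * (weight lam0 ω a k a * rightFactor ω a b a ^ (n - k)) *
      deriv (leftFactor ω a) a ^ k = 1 := by
  rw [deriv_leftFactor_self, rightFactor_left_eq_one hne]
  have hfac : (k.factorial : ℂ) ≠ 0 := Nat.cast_ne_zero.2 k.factorial_ne_zero
  simp only [weight, sub_self, mul_zero, Complex.exp_zero, one_pow, mul_one]
  field_simp

theorem iteratedDeriv_self (hω : ω ≠ 0) (hne : Complex.exp (ω * ((a : ℂ) - (b : ℂ))) ≠ 1) :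
    iteratedDeriv k (equidistantBernstein n lam0 ω a b k) a = 1 := by
  rw [eq_weight_mul_rightFactor_mul_leftFactor, iteratedDeriv_ofReal_mul_pow_self
    (g := fun z => weight lam0 ω a k z * rightFactor ω a b z ^ (n - k))
    (differentiable_weight.mul (differentiable_rightFactor.pow _)) differentiable_leftFactor
    leftFactor_self]
  exact factorial_mul_weight_mul_deriv_pow_eq_one hω hne

theorem hasZeroOfOrder_left (hω : ω ≠ 0) (hne : Complex.exp (ω * ((a : ℂ) - (b : ℂ))) ≠ 1) :
    HasZeroOfOrder (equidistantBernstein n lam0 ω a b k) a k := by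
  rw [eq_weight_mul_rightFactor_mul_leftFactor]
  refine hasZeroOfOrder_mul_pow (g := fun z => weight lam0 ω a k z * rightFactor ω a b z ^ (n - k))
    (differentiable_weight.mul (differentiable_rightFactor.pow _)) differentiable_leftFactor
    leftFactor_self ?_ (by rwa [deriv_leftFactor_self]) k
  simpa [rightFactor_left_eq_one hne] using weight_ne_zero hω a

theorem hasZeroOfOrder_right (hω : ω ≠ 0) (hne : Complex.exp (ω * ((a : ℂ) - (b : ℂ))) ≠ 1) :
    HasZeroOfOrder (equidistantBernstein n lam0 ω a b k) b (n - k) := by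
  rw [eq_weight_mul_leftFactor_mul_rightFactor]
  refine hasZeroOfOrder_mul_pow (g := fun z => weight lam0 ω a k z * leftFactor ω a z ^ k)
    (differentiable_weight.mul (differentiable_leftFactor.pow _)) differentiable_rightFactor
    rightFactor_self ?_ ?_ (n - k)
  · exact mul_ne_zero (weight_ne_zero hω b) (pow_ne_zero k (leftFactor_right_ne_zero hne))
  · rw [deriv_rightFactor_self]
    exact div_ne_zero (neg_ne_zero.2 hω) (sub_ne_zero.2 hne.symm)

theorem tendsto_div_sub_pow (hω : ω ≠ 0) (hne : Complex.exp (ω * ((a : ℂ) - (b : ℂ))) ≠ 1) :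
    Tendsto (fun x : ℝ => (k.factorial : ℂ) * equidistantBernstein n lam0 ω a b k x /
      ((x : ℂ) - (a : ℂ)) ^ k) (𝓝[≠] a) (𝓝 1) := by
  have h := (tendsto_mul_pow_div_sub_pow
    (g := fun z => weight lam0 ω a k z * rightFactor ω a b z ^ (n - k))
    (differentiable_weight.mul (differentiable_rightFactor.pow _)).continuous
    differentiable_leftFactor (u := leftFactor ω a) leftFactor_self k).const_mul (k.factorial : ℂ)
  rw [← mul_assoc, factorial_mul_weight_mul_deriv_pow_eq_one hω hne] at h
  refine h.congr fun x => ?_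
  rw [eq_weight_mul_rightFactor_mul_leftFactor]
  exact (mul_div_assoc _ _ _).symm

theorem exists_eq_expMulEvalExp (hk : k ≤ n) :
    ∃ R : ℂ[X], R.natDegree ≤ n ∧ equidistantBernstein n lam0 ω a b k = expMulEvalExp lam0 ω R := by
  have hshift (μ c z : ℂ) :
      Complex.exp (μ * (z - c)) = Complex.exp (-(μ * c)) * Complex.exp (μ * z) := by
    rw [← Complex.exp_add]
    ring_nf
  refine ⟨C (Complex.exp (-(lam0 * a)) / (k.factorial * ω ^ k)) *
      (C (Complex.exp (-(ω * a))) * X - 1) ^ k *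
      (C (1 - Complex.exp (ω * (a - b)))⁻¹ * (1 - C (Complex.exp (-(ω * b))) * X)) ^ (n - k),
    ?_, ?_⟩
  · compute_degree
    omega
  · funext x
    simp only [equidistantBernstein, expMulEvalExp, eval_mul, eval_pow, eval_sub, eval_C, eval_X,
      eval_one, hshift]
    ring

end equidistantBernstein

open equidistantBernstein in
theorem equidistant_bernstein_is_basis_general
    (n : ℕ) (lam0 ω : ℂ) (hω : ω ≠ 0) (a b : ℝ)
    (hne : Complex.exp (ω * ((a : ℂ) - (b : ℂ))) ≠ 1) :
    IsBernsteinBasis (List.ofFn fun j : Fin (n + 1) => lam0 + ((j : ℕ) : ℂ) * ω) a b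
      (equidistantBernstein n lam0 ω a b) ∧
    ∀ k ≤ n, Tendsto
      (fun x : ℝ => (k.factorial : ℂ) * equidistantBernstein n lam0 ω a b k x /
        ((x : ℂ) - (a : ℂ)) ^ k) (𝓝[≠] a) (𝓝 1) := by
  have hlen : (List.ofFn fun j : Fin (n + 1) => lam0 + ((j : ℕ) : ℂ) * ω).length - 1 = n := by
    simp
  refine ⟨fun k hk => ?_, fun k _ => tendsto_div_sub_pow hω hne⟩
  rw [hlen] at hk ⊢
  obtain ⟨R, hR, hp⟩ := exists_eq_expMulEvalExp (lam0 := lam0) (ω := ω) (a := a) (b := b) hk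
  exact ⟨hp ▸ expMulEvalExp_mem_expPoly lam0 ω hR, hasZeroOfOrder_left hω hne,
    hasZeroOfOrder_right hω hne, iteratedDeriv_self hω hne⟩

/-- **Proposition (equidistant eigenvalues).** Suppose `ω ≠ 0` and
`λ_j = λ_0 + jω`, `j = 0,…,n`.  Then the functions `p_{n,k}`, `k = 0,…,n`, above
belong to `E_{(λ_0,…,λ_n)}` and form a Bernstein basis for `a ≠ b`, satisfying the
normalization `k! · lim_{x→a} p_{n,k}(x)/(x−a)^k = 1`. -/
theorem equidistant_bernstein_is_basis
    (n : ℕ) (lam0 ω : ℂ) (hω : ω ≠ 0) (a b : ℝ) (hab : a ≠ b)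
    (hne : Complex.exp (ω * ((a : ℂ) - (b : ℂ))) ≠ 1) :
    IsBernsteinBasis (List.ofFn fun j : Fin (n + 1) => lam0 + ((j : ℕ) : ℂ) * ω) a b
      (equidistantBernstein n lam0 ω a b) ∧
    ∀ k ≤ n, Tendsto
      (fun x : ℝ => (k.factorial : ℂ) * equidistantBernstein n lam0 ω a b k x /
        ((x : ℂ) - (a : ℂ)) ^ k) (𝓝[≠] a) (𝓝 1) :=
  equidistant_bernstein_is_basis_general n lam0 ω hω a b hne
end
end
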